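/- In the action network AN(σ), the length (total arc cost) of any s–t path equals the total reorganization cost of the corresponding offline strategy (initial permutation followed by m element transfers), and hence the shortest s–t path length plus the corresponding access costs equals the optimal offline cost of serving σ. -/

import Mathlib

open Finset

variable {α : Type*} [DecidableEq α] [Inhabited α]

/-- Swap the items at adjacent positions `i` and `i+1` (0-indexed). -/
def swapAdj (i : ℕ) (L : List α) : List α :=
  if i + 1 < L.length then
    (L.set i (L.getD (i+1) default)).set (i+1) (L.getD i default)
  else L

/-- Apply a sequence of adjacent transpositions (given by their positions). -/
def applySwaps (ops : List ℕ) (L : List α) : List α :=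
  ops.foldl (fun M i => swapAdj i M) L

/-- Element transfer: move the item at position `k` to position `j` (0-indexed),
leaving the relative order of all other items unchanged. -/
def elemTransfer (k j : ℕ) (L : List α) : List α :=
  (L.eraseIdx k).insertIdx j (L.getD k default)

/-- Subset transfer: move the items of `S` (a subset of the items preceding `a`)
to immediately after `a`, preserving relative orders. -/
def subsetTransfer (a : α) (S : Finset α) (L : List α) : List α :=
  ((L.take (L.idxOf a)).filter (fun x => x ∉ S)) ++ [a]
    ++ ((L.take (L.idxOf a)).filter (fun x => x ∈ S)) ++ L.drop (L.idxOf a + 1)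

/-- Number of inversions between two orderings of the same items: the number of
(unordered) pairs whose relative order differs. -/
def invCount (L M : List α) : ℕ :=
  ((L.toFinset ×ˢ L.toFinset).filter
    (fun p => L.idxOf p.1 < L.idxOf p.2 ∧ M.idxOf p.2 < M.idxOf p.1)).card

/-- Configurations of a general offline strategy: `gconf ρ0 ops i` is the list before the
reorganization `ops i` preceding the `i`-th access; request `σ i` is accessed in the list
`gconf ρ0 ops (i+1) = applySwaps (ops i) (gconf ρ0 ops i)`. -/
def gconf (ρ0 : List α) (ops : ℕ → List ℕ) : ℕ → List α
  | 0 => ρ0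
  | i + 1 => applySwaps (ops i) (gconf ρ0 ops i)

/-- Total cost (all transpositions charged, access to position `p` costs `p+1`) of a
general offline strategy serving the `m` requests `σ 0, …, σ (m-1)`. -/
def gcost (ρ0 : List α) (σ : ℕ → α) (m : ℕ) (ops : ℕ → List ℕ) : ℕ :=
  ∑ i ∈ Finset.range m, ((ops i).length + (gconf ρ0 ops (i + 1)).idxOf (σ i) + 1)

/-- The set of costs achievable by general offline strategies. -/
def GenCosts (ρ0 : List α) (σ : ℕ → α) (m : ℕ) : Set ℕ :=
  {c | ∃ ops : ℕ → List ℕ, c = gcost ρ0 σ m ops}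

/-- Configurations of an element-transfer strategy: start from `ρ1` (a permutation of the
initial list) and serve request `i` by an element transfer moving `σ i` to position `js i`. -/
def econf (ρ1 : List α) (σ : ℕ → α) (js : ℕ → ℕ) : ℕ → List α
  | 0 => ρ1
  | i + 1 =>
      let M := econf ρ1 σ js i
      elemTransfer (M.idxOf (σ i)) (js i) M

/-- Total cost of an element-transfer strategy: the initial permutation costs its number of
inversions relative to `ρ0`; serving request `i` costs `|kᵢ − js i|` transpositions plus the
access cost at the new position. -/
def ecost (ρ0 ρ1 : List α) (σ : ℕ → α) (m : ℕ) (js : ℕ → ℕ) : ℕ :=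
  invCount ρ0 ρ1 +
    ∑ i ∈ Finset.range m,
      ((max ((econf ρ1 σ js i).idxOf (σ i)) (js i)
          - min ((econf ρ1 σ js i).idxOf (σ i)) (js i))
        + (econf ρ1 σ js (i + 1)).idxOf (σ i) + 1)

/-- The set of costs achievable by strategies that first permute the list and then serve
each request with a single element transfer followed by the access. -/
def ETCosts (ρ0 : List α) (σ : ℕ → α) (m : ℕ) : Set ℕ :=
  {c | ∃ (ρ1 : List α) (js : ℕ → ℕ), ρ0.Perm ρ1 ∧ (∀ i < m, js i < ρ0.length) ∧
        c = ecost ρ0 ρ1 σ m js}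

/-- Configurations of a subset-transfer strategy: request `i` is served by the subset
transfer moving `Ss i` to just behind `σ i`, followed by the access. -/
def sconf (ρ0 : List α) (σ : ℕ → α) (Ss : ℕ → Finset α) : ℕ → List α
  | 0 => ρ0
  | i + 1 => subsetTransfer (σ i) (Ss i) (sconf ρ0 σ Ss i)

/-- Total cost of a subset-transfer strategy. -/
def scost (ρ0 : List α) (σ : ℕ → α) (m : ℕ) (Ss : ℕ → Finset α) : ℕ :=
  ∑ i ∈ Finset.range m,
    (invCount (sconf ρ0 σ Ss i) (sconf ρ0 σ Ss (i + 1))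
      + (sconf ρ0 σ Ss (i + 1)).idxOf (σ i) + 1)

/-- The set of costs achievable by subset-transfer strategies. -/
def STCosts (ρ0 : List α) (σ : ℕ → α) (m : ℕ) : Set ℕ :=
  {c | ∃ Ss : ℕ → Finset α,
        (∀ i < m, ∀ s ∈ Ss i,
          (sconf ρ0 σ Ss i).idxOf s < (sconf ρ0 σ Ss i).idxOf (σ i)) ∧
        c = scost ρ0 σ m Ss}

/-- An `s`–`t` path of the action network `AN(σ)`, recorded by its layer configurations:
`g i` is the ordering at the layer-`i` node (`1 ≤ i ≤ m`), in which request `σ (i-1)` is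
accessed.  The first arc chooses an arbitrary permutation `g 1` of `ρ0`; the arc from layer
`i` to layer `i+1` is an element transfer with respect to the next requested item. -/
def IsANPath (ρ0 : List α) (σ : ℕ → α) (l m : ℕ) (g : ℕ → List α) : Prop :=
  ρ0.Perm (g 1) ∧
    ∀ i, 1 ≤ i → i < m →
      ∃ j < l, g (i + 1) = elemTransfer ((g i).idxOf (σ i)) j (g i)

/-- The total arc cost of an `s`–`t` path: the `s`-arc costs the number of inversions
between `ρ0` and `g 1`, a middle arc costs the number of inversions of the corresponding
element transfer, and arcs into `t` cost `0`. -/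
def pathArcCost (ρ0 : List α) (σ : ℕ → α) (m : ℕ) (g : ℕ → List α) : ℕ :=
  invCount ρ0 (g 1) + ∑ i ∈ Finset.Ico 1 m, invCount (g i) (g (i + 1))

/-- The total access cost along a path: `σ (i-1)` is accessed in the layer-`i` configuration. -/
def pathAccessCost (σ : ℕ → α) (m : ℕ) (g : ℕ → List α) : ℕ :=
  ∑ i ∈ Finset.Icc 1 m, ((g i).idxOf (σ (i - 1)) + 1)

/-! Every layer of an `s`–`t` path is a permutation of `ρ0`, and an element transfer from
position `k` to position `j` inverts exactly the `|k - j|` pairs formed by the moved item and the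
items it jumps over. So both a path and an element-transfer strategy cost `configCost` of their
sequence of lists. A path is the strategy that starts from its layer-`1` list and whose first
transfer is trivial; conversely the lists of a strategy form a path whose `s`-arc, by the
triangle inequality for inversions, costs at most the initial permutation plus the first
transfer. Hence the two infima agree, and the characterization hypothesis identifies them with
the optimal offline cost. -/

theorem List.insertIdx_length_append {β : Type*} (A B : List β) (x : β) :
    (A ++ B).insertIdx A.length x = A ++ x :: B := by
  induction A with
  | nil => rfl
  | cons a A ih => simp [List.insertIdx_succ_cons, ih]

section ElementTransfer

open List

variable {β : Type*} [Inhabited β]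

theorem elemTransfer_self {L : List β} {k : ℕ} (hk : k < L.length) :
    elemTransfer k k L = L := by
  rw [elemTransfer, getD_eq_getElem _ _ hk, insertIdx_eraseIdx_getElem]

theorem perm_elemTransfer {L : List β} {k j : ℕ} (hk : k < L.length) (hj : j < L.length) :
    L.Perm (elemTransfer k j L) := by
  rw [elemTransfer, getD_eq_getElem _ _ hk]
  refine (getElem_cons_eraseIdx_perm hk).symm.trans (perm_insertIdx _ _ ?_).symm
  rw [length_eraseIdx_of_lt hk]
  omega

theorem elemTransfer_append_cons_left (A₁ A₂ B : List β) (x : β) :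
    elemTransfer (A₁.length + A₂.length) A₁.length (A₁ ++ A₂ ++ x :: B)
      = A₁ ++ x :: (A₂ ++ B) := by
  rw [elemTransfer, ← length_append, eraseIdx_append_of_length_le le_rfl, Nat.sub_self,
    eraseIdx_cons_zero, getD_eq_getElem _ _ (by simp), getElem_append_right le_rfl]
  simp [insertIdx_length_append]

theorem elemTransfer_append_cons_right (A B₁ B₂ : List β) (x : β) :
    elemTransfer A.length (A.length + B₁.length) (A ++ x :: (B₁ ++ B₂))
      = A ++ B₁ ++ x :: B₂ := by
  rw [elemTransfer, eraseIdx_append_of_length_le le_rfl, Nat.sub_self, eraseIdx_cons_zero,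
    getD_eq_getElem _ _ (by simp), getElem_append_right le_rfl, ← length_append,
    ← append_assoc, insertIdx_length_append]
  simp

end ElementTransfer

section Inversions

open List

variable {β : Type*} [DecidableEq β]

theorem invCount_self (L : List β) : invCount L L = 0 := by
  simp only [invCount, Finset.card_eq_zero, Finset.filter_eq_empty_iff]
  omega

theorem invCount_comm {L M : List β} (h : L.Perm M) : invCount L M = invCount M L := by
  unfold invCount
  rw [toFinset_eq_of_perm _ _ h]
  refine Finset.card_bij' (fun p _ => p.swap) (fun p _ => p.swap) ?_ ?_ (by simp) (by simp) <;>
  · intro p hp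
    simp only [Finset.mem_filter, Finset.mem_product, Prod.fst_swap, Prod.snd_swap] at hp ⊢
    tauto

theorem invCount_triangle {L M N : List β} (h : L.Perm M) :
    invCount L N ≤ invCount L M + invCount M N := by
  unfold invCount
  rw [← toFinset_eq_of_perm _ _ h]
  refine (Finset.card_le_card fun p hp => ?_).trans (Finset.card_union_le _ _)
  simp only [Finset.mem_filter, Finset.mem_product, Finset.mem_union, mem_toFinset] at hp ⊢
  obtain ⟨⟨ha, hb⟩, hL, hN⟩ := hp
  rcases lt_trichotomy (M.idxOf p.1) (M.idxOf p.2) with hlt | heq | hgt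
  · exact Or.inr ⟨⟨ha, hb⟩, hlt, hN⟩
  · rw [idxOf_inj (h.subset ha)] at heq
    rw [heq] at hL
    exact absurd hL (lt_irrefl _)
  · exact Or.inl ⟨⟨ha, hb⟩, hL, hgt⟩

theorem idxOf_append_cons_left {A₁ A₂ B : List β} {x y : β}
    (hnd : (A₁ ++ A₂ ++ x :: B).Nodup) (hyx : y ≠ x) :
    (y ∈ A₂ ∧ (A₁ ++ x :: (A₂ ++ B)).idxOf y = (A₁ ++ A₂ ++ x :: B).idxOf y + 1 ∧
        A₁.length ≤ (A₁ ++ A₂ ++ x :: B).idxOf y ∧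
        (A₁ ++ A₂ ++ x :: B).idxOf y < A₁.length + A₂.length) ∨
      (y ∉ A₂ ∧ (A₁ ++ x :: (A₂ ++ B)).idxOf y = (A₁ ++ A₂ ++ x :: B).idxOf y ∧
        ((A₁ ++ A₂ ++ x :: B).idxOf y < A₁.length ∨
          A₁.length + A₂.length < (A₁ ++ A₂ ++ x :: B).idxOf y)) := by
  have hA₁₂ : ∀ a ∈ A₁, ∀ b ∈ A₂, a ≠ b :=
    (nodup_append.1 (nodup_append.1 hnd).1).2.2
  by_cases hyA₂ : y ∈ A₂
  · have hyA₁ : y ∉ A₁ := fun h => hA₁₂ y h y hyA₂ rfl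
    have := idxOf_lt_length_of_mem hyA₂
    left
    simp [idxOf_append, hyA₂, hyA₁, Ne.symm hyx]
    omega
  · right
    by_cases hyA₁ : y ∈ A₁
    · have := idxOf_lt_length_of_mem hyA₁
      simp [idxOf_append, hyA₁, hyA₂]
      omega
    · simp [idxOf_append, hyA₁, hyA₂, Ne.symm hyx]
      omega

/-- The inverted pairs are exactly `(y, x)` with `y ∈ A₂`. -/
theorem invCount_append_cons_left {A₁ A₂ B : List β} {x : β}
    (hnd : (A₁ ++ A₂ ++ x :: B).Nodup) :
    invCount (A₁ ++ A₂ ++ x :: B) (A₁ ++ x :: (A₂ ++ B)) = A₂.length := by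
  have hshift := fun y => idxOf_append_cons_left (B := B) (y := y) hnd
  set L := A₁ ++ A₂ ++ x :: B
  set M := A₁ ++ x :: (A₂ ++ B)
  have hA₂ : A₂.Nodup := (nodup_append.1 (nodup_append.1 hnd).1).2.1
  have hxA : x ∉ A₁ ++ A₂ := fun h => (nodup_append.1 hnd).2.2 x h x mem_cons_self rfl
  rw [mem_append, not_or] at hxA
  have hLx : L.idxOf x = A₁.length + A₂.length := by simp [L, idxOf_append, hxA]; omega
  have hMx : M.idxOf x = A₁.length := by simp [M, idxOf_append, hxA]
  have hinv : (L.toFinset ×ˢ L.toFinset).filter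
      (fun p => L.idxOf p.1 < L.idxOf p.2 ∧ M.idxOf p.2 < M.idxOf p.1)
      = A₂.toFinset.image (·, x) := by
    ext ⟨p, q⟩
    simp only [Finset.mem_filter, Finset.mem_product, mem_toFinset, Finset.mem_image,
      Prod.mk.injEq]
    constructor
    · rintro ⟨-, hLpq, hMqp⟩
      have hpx : p ≠ x := by
        rintro rfl
        have := hshift q (by rintro rfl; omega)
        omega
      have := hshift p hpx
      by_cases hqx : q = x
      · subst hqx
        rcases this with ⟨hpA₂, -⟩ | hp
        · exact ⟨p, hpA₂, rfl, rfl⟩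
        · omega
      · have := hshift q hqx
        omega
    · rintro ⟨y, hy, rfl, rfl⟩
      have := (hshift y fun h => hxA.2 (h ▸ hy)).resolve_right fun h => h.1 hy
      exact ⟨⟨by simp [L, hy], by simp [L]⟩, by omega, by omega⟩
  rw [invCount, hinv, Finset.card_image_of_injective _ fun _ _ h => (Prod.mk.inj h).1,
    toFinset_card_of_nodup hA₂]

theorem invCount_elemTransfer [Inhabited β] {L : List β} (hnd : L.Nodup) {k j : ℕ}
    (hk : k < L.length) (hj : j < L.length) :
    invCount L (elemTransfer k j L) = max k j - min k j := by
  obtain ⟨A, x, B, rfl, rfl⟩ : ∃ A x B, L = A ++ x :: B ∧ A.length = k :=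
    ⟨L.take k, L[k], L.drop (k + 1), by simp, by simp; omega⟩
  rcases le_total j A.length with hjk | hkj
  · obtain ⟨A₁, A₂, rfl, rfl⟩ : ∃ A₁ A₂, A = A₁ ++ A₂ ∧ A₁.length = j :=
      ⟨A.take j, A.drop j, by simp, by simp; omega⟩
    rw [length_append, elemTransfer_append_cons_left, invCount_append_cons_left hnd]
    omega
  · obtain ⟨B₁, B₂, rfl, hB₁⟩ : ∃ B₁ B₂, B = B₁ ++ B₂ ∧ B₁.length = j - A.length :=
      ⟨B.take (j - A.length), B.drop (j - A.length), by simp, by simp at hj ⊢; omega⟩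
    obtain rfl : j = A.length + B₁.length := by omega
    have hperm : (A ++ B₁ ++ x :: B₂).Perm (A ++ x :: (B₁ ++ B₂)) := by
      rw [append_assoc]
      exact perm_middle.append_left A
    rw [elemTransfer_append_cons_right, ← invCount_comm hperm,
      invCount_append_cons_left (hperm.nodup_iff.2 hnd)]
    omega

end Inversions

section Strategies

variable {β : Type*} [DecidableEq β]

/-- `c 0` is the list after the initial permutation, and `σ i` is accessed in `c (i + 1)`. -/
def configCost (ρ0 : List β) (σ : ℕ → β) (m : ℕ) (c : ℕ → List β) : ℕ :=
  invCount ρ0 (c 0) + ∑ i ∈ range m, (invCount (c i) (c (i + 1)) + (c (i + 1)).idxOf (σ i) + 1)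

theorem configCost_congr {ρ0 : List β} {σ : ℕ → β} {m : ℕ} {c c' : ℕ → List β}
    (h : ∀ i ≤ m, c i = c' i) : configCost ρ0 σ m c = configCost ρ0 σ m c' := by
  rw [configCost, configCost, h 0 (Nat.zero_le m)]
  refine congrArg _ (sum_congr rfl fun i hi => ?_)
  rw [h i (mem_range.1 hi).le, h (i + 1) (mem_range.1 hi)]

theorem configCost_max_one_le {ρ0 : List β} {σ : ℕ → β} {m : ℕ} {c : ℕ → List β}
    (hρ : ρ0.Perm (c 0)) (hm : 1 ≤ m) :
    configCost ρ0 σ m (fun i => c (max i 1)) ≤ configCost ρ0 σ m c := by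
  obtain ⟨n, rfl⟩ : ∃ n, m = n + 1 := ⟨m - 1, by omega⟩
  have := invCount_triangle (N := c 1) hρ
  simp only [configCost, sum_range_succ', zero_add, max_eq_left (Nat.le_add_left 1 _),
    max_eq_right zero_le_one, invCount_self]
  omega

theorem pathCost_eq_configCost (ρ0 : List β) (σ : ℕ → β) (m : ℕ) (g : ℕ → List β) :
    pathArcCost ρ0 σ m g + pathAccessCost σ m g = configCost ρ0 σ m (fun i => g (max i 1)) := by
  have harc : ∑ i ∈ Ico 1 m, invCount (g i) (g (i + 1))
      = ∑ i ∈ range m, invCount (g (max i 1)) (g (i + 1)) := by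
    refine sum_subset_zero_on_sdiff (fun i hi => mem_range.2 (mem_Ico.1 hi).2) (fun i hi => ?_)
      (fun i hi => by rw [max_eq_left (mem_Ico.1 hi).1])
    obtain rfl : i = 0 := by simp at hi; omega
    exact invCount_self _
  have hacc : ∑ i ∈ Icc 1 m, ((g i).idxOf (σ (i - 1)) + 1)
      = ∑ i ∈ range m, ((g (i + 1)).idxOf (σ i) + 1) := by
    rw [← Ico_add_one_right_eq_Icc, sum_Ico_eq_sum_range, Nat.add_sub_cancel]
    simp [add_comm]
  rw [pathArcCost, pathAccessCost, configCost, harc, hacc, add_assoc, ← sum_add_distrib]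
  simp only [add_assoc, max_eq_left (Nat.le_add_left 1 _), max_eq_right zero_le_one]

end Strategies

section ElementTransferStrategies

variable {β : Type*} [DecidableEq β] [Inhabited β] {ρ0 ρ1 : List β} {σ : ℕ → β} {m : ℕ}
  {js : ℕ → ℕ}

theorem econf_succ (i : ℕ) : econf ρ1 σ js (i + 1)
    = elemTransfer ((econf ρ1 σ js i).idxOf (σ i)) (js i) (econf ρ1 σ js i) := rfl

theorem invCount_elemTransfer_idxOf {L : List β} {a : β} {j : ℕ} (hnd : ρ0.Nodup)
    (hL : ρ0.Perm L) (ha : a ∈ ρ0) (hj : j < ρ0.length) :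
    invCount L (elemTransfer (L.idxOf a) j L) = max (L.idxOf a) j - min (L.idxOf a) j :=
  invCount_elemTransfer (hL.nodup_iff.1 hnd) (List.idxOf_lt_length_of_mem (hL.subset ha))
    (hL.length_eq ▸ hj)

theorem perm_econf (hσ : ∀ i < m, σ i ∈ ρ0) (hρ1 : ρ0.Perm ρ1)
    (hjs : ∀ i < m, js i < ρ0.length) : ∀ i ≤ m, ρ0.Perm (econf ρ1 σ js i)
  | 0, _ => hρ1
  | i + 1, hi => by
    have hp := perm_econf hσ hρ1 hjs i (by omega)
    rw [econf_succ]
    exact hp.trans (perm_elemTransfer (List.idxOf_lt_length_of_mem (hp.subset (hσ i hi)))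
      (hp.length_eq ▸ hjs i hi))

theorem ecost_eq_configCost (hnd : ρ0.Nodup) (hσ : ∀ i < m, σ i ∈ ρ0) (hρ1 : ρ0.Perm ρ1)
    (hjs : ∀ i < m, js i < ρ0.length) :
    ecost ρ0 ρ1 σ m js = configCost ρ0 σ m (econf ρ1 σ js) := by
  refine congrArg _ (sum_congr rfl fun i hi => ?_)
  have hi := mem_range.1 hi
  rw [econf_succ, invCount_elemTransfer_idxOf hnd (perm_econf hσ hρ1 hjs i hi.le) (hσ i hi)
    (hjs i hi)]

theorem isANPath_econf (hσ : ∀ i < m, σ i ∈ ρ0) (hρ1 : ρ0.Perm ρ1)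
    (hjs : ∀ i < m, js i < ρ0.length) (hm : 1 ≤ m) :
    IsANPath ρ0 σ ρ0.length m (econf ρ1 σ js) :=
  ⟨perm_econf hσ hρ1 hjs 1 hm, fun i _ hi => ⟨js i, hjs i hi, rfl⟩⟩

/-- The first transfer of the strategy is trivial: `σ 0` is accessed in the layer-`1` list. -/
theorem IsANPath.exists_econf_eq {g : ℕ → List β} (hg : IsANPath ρ0 σ ρ0.length m g)
    (hσ : ∀ i < m, σ i ∈ ρ0) :
    ∃ js : ℕ → ℕ, (∀ i < m, js i < ρ0.length) ∧ ∀ i ≤ m, econf (g 1) σ js i = g (max i 1) := by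
  have hstep : ∀ i, ∃ j, (i = 0 → j = (g 1).idxOf (σ 0)) ∧ (1 ≤ i → i < m →
      j < ρ0.length ∧ g (i + 1) = elemTransfer ((g i).idxOf (σ i)) j (g i)) := by
    rintro (_ | i)
    · exact ⟨_, fun _ => rfl, by omega⟩
    · by_cases hi : i + 1 < m
      · obtain ⟨j, hj, h⟩ := hg.2 (i + 1) (by omega) hi
        exact ⟨j, by omega, fun _ _ => ⟨hj, h⟩⟩
      · exact ⟨0, by omega, by omega⟩
  choose js hjs₀ hjs using hstep
  have hσ₀ : ∀ hm : 0 < m, (g 1).idxOf (σ 0) < (g 1).length := fun hm =>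
    List.idxOf_lt_length_of_mem (hg.1.subset (hσ 0 hm))
  refine ⟨js, fun i hi => ?_, fun i hi => ?_⟩
  · rcases i with _ | i
    · rw [hjs₀ 0 rfl, hg.1.length_eq]
      exact hσ₀ hi
    · exact (hjs _ (by omega) hi).1
  · induction i with
    | zero => rfl
    | succ i ih =>
      rw [econf_succ, ih (by omega)]
      rcases i with _ | i
      · rw [hjs₀ 0 rfl]
        exact elemTransfer_self (hσ₀ hi)
      · rw [max_eq_left (by omega : 1 ≤ i + 1), max_eq_left (by omega : 1 ≤ i + 1 + 1)]
        exact (hjs (i + 1) (by omega) hi).2.symm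

theorem IsANPath.perm {g : ℕ → List β} (hg : IsANPath ρ0 σ ρ0.length m g)
    (hσ : ∀ i < m, σ i ∈ ρ0) {i : ℕ} (hi₁ : 1 ≤ i) (hi : i ≤ m) : ρ0.Perm (g i) := by
  obtain ⟨js, hjs, hgjs⟩ := hg.exists_econf_eq hσ
  rw [← max_eq_left hi₁, ← hgjs i hi]
  exact perm_econf hσ hg.1 hjs i hi

def pathCosts (ρ0 : List β) (σ : ℕ → β) (l m : ℕ) : Set ℕ :=
  {c | ∃ g : ℕ → List β, IsANPath ρ0 σ l m g ∧ c = pathArcCost ρ0 σ m g + pathAccessCost σ m g}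

theorem pathCosts_subset_ETCosts (hnd : ρ0.Nodup) (hσ : ∀ i < m, σ i ∈ ρ0) :
    pathCosts ρ0 σ ρ0.length m ⊆ ETCosts ρ0 σ m := by
  rintro _ ⟨g, hg, rfl⟩
  obtain ⟨js, hjs, hgjs⟩ := hg.exists_econf_eq hσ
  refine ⟨g 1, js, hg.1, hjs, ?_⟩
  rw [ecost_eq_configCost hnd hσ hg.1 hjs, pathCost_eq_configCost]
  exact (configCost_congr hgjs).symm

theorem exists_pathCosts_le_of_mem_ETCosts (hnd : ρ0.Nodup) (hσ : ∀ i < m, σ i ∈ ρ0)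
    (hm : 1 ≤ m) : ∀ c ∈ ETCosts ρ0 σ m, ∃ c' ∈ pathCosts ρ0 σ ρ0.length m, c' ≤ c := by
  rintro _ ⟨ρ1, js, hρ1, hjs, rfl⟩
  refine ⟨_, ⟨econf ρ1 σ js, isANPath_econf hσ hρ1 hjs hm, rfl⟩, ?_⟩
  rw [pathCost_eq_configCost, ecost_eq_configCost hnd hσ hρ1 hjs]
  exact configCost_max_one_le hρ1 hm

theorem sInf_pathCosts_eq_sInf_ETCosts (hnd : ρ0.Nodup) (hσ : ∀ i < m, σ i ∈ ρ0)
    (hm : 1 ≤ m) : sInf (pathCosts ρ0 σ ρ0.length m) = sInf (ETCosts ρ0 σ m) := by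
  simpa using monotoneOn_id.csInf_eq_of_subset_of_forall_exists_le (OrderBot.bddBelow _)
    (pathCosts_subset_ETCosts hnd hσ) (exists_pathCosts_le_of_mem_ETCosts hnd hσ hm)

end ElementTransferStrategies

theorem actionNetwork_shortest_path_general (ρ0 : List α) (σ : ℕ → α) (l m : ℕ)
    (hnd : ρ0.Nodup) (hlen : ρ0.length = l) (hm : 1 ≤ m)
    (hσ : ∀ i, σ i ∈ ρ0)
    (hChar : sInf (ETCosts ρ0 σ m) = sInf (GenCosts ρ0 σ m)) :
    (∀ g : ℕ → List α, IsANPath ρ0 σ l m g →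
        ∀ i, 1 ≤ i → i < m → ∀ j < l,
          g (i + 1) = elemTransfer ((g i).idxOf (σ i)) j (g i) →
          invCount (g i) (g (i + 1))
            = max ((g i).idxOf (σ i)) j - min ((g i).idxOf (σ i)) j)
    ∧ sInf {c : ℕ | ∃ g : ℕ → List α, IsANPath ρ0 σ l m g ∧
          c = pathArcCost ρ0 σ m g + pathAccessCost σ m g}
        = sInf (GenCosts ρ0 σ m) := by
  subst hlen
  refine ⟨fun g hg i hi₁ hi j hj hstep => ?_,
    (sInf_pathCosts_eq_sInf_ETCosts hnd (fun i _ => hσ i) hm).trans hChar⟩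
  rw [hstep]
  exact invCount_elemTransfer_idxOf hnd (hg.perm (fun i _ => hσ i) hi₁ hi.le) (hσ i) hj

/-- In the action network `AN(σ)`: (i) the total arc cost of any `s`–`t`
path equals the total reorganization cost of the corresponding offline strategy — each
middle arc costs exactly the `|k − j|` adjacent transpositions of its element transfer —
and (ii) given the characterization theorem (some optimal offline solution is an initial
permutation followed by `m` element transfers), the minimum over `s`–`t` paths of arc cost
plus access cost equals the optimal offline cost of serving `σ`. -/
theorem actionNetwork_shortest_path (ρ0 : List α) (σ : ℕ → α) (l m : ℕ)
    (hnd : ρ0.Nodup) (hlen : ρ0.length = l) (hl : 0 < l) (hm : 1 ≤ m)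
    (hσ : ∀ i, σ i ∈ ρ0)
    (hChar : sInf (ETCosts ρ0 σ m) = sInf (GenCosts ρ0 σ m)) :
    (∀ g : ℕ → List α, IsANPath ρ0 σ l m g →
        ∀ i, 1 ≤ i → i < m → ∀ j < l,
          g (i + 1) = elemTransfer ((g i).idxOf (σ i)) j (g i) →
          invCount (g i) (g (i + 1))
            = max ((g i).idxOf (σ i)) j - min ((g i).idxOf (σ i)) j)
    ∧ sInf {c : ℕ | ∃ g : ℕ → List α, IsANPath ρ0 σ l m g ∧
          c = pathArcCost ρ0 σ m g + pathAccessCost σ m g}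
        = sInf (GenCosts ρ0 σ m) :=
  actionNetwork_shortest_path_general ρ0 σ l m hnd hlen hm hσ hChar
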